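/- Let A ∈ ℝ^{m×n} have rank r, and let M̃ = [A, A+E₂, …, A+E_k] be the concatenation of A with k−1 perturbed copies. Then for i = 1,…,r, |σ_i(M̃) − √k·σ_i(A)| ≤ (1/(√k·σ_i(A))) · Σ_{j=2}^k (2‖A‖₂‖E_j‖₂ + ‖E_j‖₂²). -/

import Mathlib

open Matrix Finset

/-- Spectral (ℓ²-operator) norm of a matrix. -/
noncomputable def specNorm {m n : Type*} [Fintype m] [Fintype n] [DecidableEq n]
    (A : Matrix m n ℝ) : ℝ :=
  ‖LinearMap.toContinuousLinearMap (Matrix.toEuclideanLin A)‖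

/-- Eigenvalues of a real symmetric matrix, in nonincreasing order (0-based);
returns 0 if the matrix is not Hermitian. -/
noncomputable def eigDesc {n : ℕ} (A : Matrix (Fin n) (Fin n) ℝ) : Fin n → ℝ :=
  if hA : A.IsHermitian then
    fun i => hA.eigenvalues (Tuple.sort hA.eigenvalues i.rev)
  else fun _ => 0

/-- The `i`-th largest singular value (0-based), defined as the square root of the
`i`-th largest eigenvalue of `Aᵀ * A`; zero for out-of-range indices. -/
noncomputable def sval {m n : ℕ} (A : Matrix (Fin m) (Fin n) ℝ) (i : ℕ) : ℝ :=
  if h : i < n then Real.sqrt (eigDesc (Aᵀ * A) ⟨i, h⟩) else 0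

/-- Horizontal concatenation of `k` matrices of size `m × n`. -/
noncomputable def hconcat {m n k : ℕ} (A : Fin k → Matrix (Fin m) (Fin n) ℝ) :
    Matrix (Fin m) (Fin (k * n)) ℝ :=
  Matrix.of fun i j => A (finProdFinEquiv.symm j).1 i (finProdFinEquiv.symm j).2

/-!
With `M̃ = [A, A + E₂, …, A + E_k]` we have
`M̃ M̃ᵀ = ∑ⱼ (A + Eⱼ)(A + Eⱼ)ᵀ = k A Aᵀ + ∑_{j ≥ 2} (A Eⱼᵀ + Eⱼ Aᵀ + Eⱼ Eⱼᵀ)`.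
Since `σᵢ(X)² = λᵢ(X Xᵀ)` for every matrix `X`, Weyl's inequality bounds
`|σᵢ(M̃)² - k σᵢ(A)²|` by the spectral norm of the perturbation, hence by the sum on the right.
As `σᵢ(A) > 0` for `i < rank A`, the elementary `|a - b| · b ≤ |a² - b²|` (for `a, b ≥ 0`)
turns this into the bound for `σᵢ(M̃) - √k σᵢ(A)`.
Weyl's inequality and `σᵢ(T) = σᵢ(T†)` both come from the Courant–Fischer min-max principle.
-/

open Module LinearMap
open scoped RealInnerProductSpace

namespace OrthonormalBasis

variable {ι 𝕜 E : Type*} [Fintype ι] [RCLike 𝕜] [NormedAddCommGroup E] [InnerProductSpace 𝕜 E]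

theorem inner_eq_zero_of_mem_span_image (b : OrthonormalBasis ι 𝕜 E) {s : Set ι} {x : E}
    (hx : x ∈ Submodule.span 𝕜 (b '' s)) {j : ι} (hj : j ∉ s) : inner 𝕜 (b j) x = 0 := by
  rw [← b.coe_toBasis, Basis.mem_span_image] at hx
  rw [← b.repr_apply_apply, ← b.coe_toBasis_repr_apply]
  by_contra h
  exact hj (hx (Finsupp.mem_support_iff.mpr h))

theorem finrank_span_image (b : OrthonormalBasis ι 𝕜 E) (s : Finset ι) :
    finrank 𝕜 (Submodule.span 𝕜 (b '' s)) = s.card := by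
  rw [Set.image_eq_range]
  exact (finrank_span_eq_card
    (b.orthonormal.linearIndependent.comp _ Subtype.val_injective)).trans (by simp)

end OrthonormalBasis

namespace LinearMap.IsSymmetric

variable {E : Type*} [NormedAddCommGroup E] [InnerProductSpace ℝ E] [FiniteDimensional ℝ E]
  {S T : E →ₗ[ℝ] E} {n : ℕ}

theorem inner_apply_self_eq_sum (hT : T.IsSymmetric) (hn : finrank ℝ E = n) (x : E) :
    ⟪T x, x⟫ = ∑ j, hT.eigenvalues hn j * ⟪hT.eigenvectorBasis hn j, x⟫ ^ 2 := by
  rw [← (hT.eigenvectorBasis hn).repr.inner_map_map, PiLp.inner_apply]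
  refine Finset.sum_congr rfl fun j _ => ?_
  rw [eigenvectorBasis_apply_self_apply]
  simp only [Real.ringHom_apply, OrthonormalBasis.repr_apply_apply, RCLike.inner_apply]
  ring

theorem mul_norm_sq_le_inner_of_mem_span (hT : T.IsSymmetric) (hn : finrank ℝ E = n)
    {s : Set (Fin n)} {c : ℝ} (hc : ∀ j ∈ s, c ≤ hT.eigenvalues hn j) {x : E}
    (hx : x ∈ Submodule.span ℝ (hT.eigenvectorBasis hn '' s)) : c * ‖x‖ ^ 2 ≤ ⟪T x, x⟫ := by
  rw [← (hT.eigenvectorBasis hn).sum_sq_inner_right, inner_apply_self_eq_sum, Finset.mul_sum]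
  refine Finset.sum_le_sum fun j _ => ?_
  by_cases hj : j ∈ s
  · exact mul_le_mul_of_nonneg_right (hc j hj) (sq_nonneg _)
  · simp [OrthonormalBasis.inner_eq_zero_of_mem_span_image _ hx hj]

theorem inner_le_mul_norm_sq_of_mem_span (hT : T.IsSymmetric) (hn : finrank ℝ E = n)
    {s : Set (Fin n)} {c : ℝ} (hc : ∀ j ∈ s, hT.eigenvalues hn j ≤ c) {x : E}
    (hx : x ∈ Submodule.span ℝ (hT.eigenvectorBasis hn '' s)) : ⟪T x, x⟫ ≤ c * ‖x‖ ^ 2 := by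
  rw [← (hT.eigenvectorBasis hn).sum_sq_inner_right, inner_apply_self_eq_sum, Finset.mul_sum]
  refine Finset.sum_le_sum fun j _ => ?_
  by_cases hj : j ∈ s
  · exact mul_le_mul_of_nonneg_right (hc j hj) (sq_nonneg _)
  · simp [OrthonormalBasis.inner_eq_zero_of_mem_span_image _ hx hj]

theorem exists_finrank_le_forall_mul_norm_sq_le_inner (hT : T.IsSymmetric)
    (hn : finrank ℝ E = n) (i : Fin n) :
    ∃ V : Submodule ℝ E, (i : ℕ) + 1 ≤ finrank ℝ V ∧
      ∀ x ∈ V, hT.eigenvalues hn i * ‖x‖ ^ 2 ≤ ⟪T x, x⟫ := by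
  refine ⟨Submodule.span ℝ (hT.eigenvectorBasis hn '' (Finset.Iic i : Finset _)), ?_,
    fun x hx => hT.mul_norm_sq_le_inner_of_mem_span hn (fun j hj => ?_) hx⟩
  · simp [OrthonormalBasis.finrank_span_image]
  · exact hT.eigenvalues_antitone hn (by simpa using hj)

theorem le_eigenvalues_of_forall_mul_norm_sq_le_inner (hT : T.IsSymmetric)
    (hn : finrank ℝ E = n) (i : Fin n) {V : Submodule ℝ E} (hV : (i : ℕ) + 1 ≤ finrank ℝ V)
    {c : ℝ} (hc : ∀ x ∈ V, c * ‖x‖ ^ 2 ≤ ⟪T x, x⟫) : c ≤ hT.eigenvalues hn i := by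
  set W := Submodule.span ℝ (hT.eigenvectorBasis hn '' (Finset.Ici i : Finset _))
  have hW : finrank ℝ W = n - i := by simp [W, OrthonormalBasis.finrank_span_image]
  -- `V` and `W` have dimensions adding up to more than `n`, so they meet nontrivially.
  obtain ⟨x, ⟨hxV, hxW⟩, hx0⟩ : ∃ x ∈ V ⊓ W, x ≠ 0 := by
    refine (Submodule.ne_bot_iff _).mp fun hbot => ?_
    have := Submodule.finrank_sup_add_finrank_inf_eq V W
    rw [hbot, finrank_bot] at this
    have := (V ⊔ W).finrank_le
    omega
  have hupper := hT.inner_le_mul_norm_sq_of_mem_span hn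
    (fun j hj => hT.eigenvalues_antitone hn (by simpa using hj)) hxW
  have : 0 < ‖x‖ ^ 2 := by positivity
  nlinarith [hc x hxV]

theorem eigenvalues_le_add_of_inner_sub_le (hS : S.IsSymmetric) (hT : T.IsSymmetric)
    (hn : finrank ℝ E = n) {c : ℝ} (hc : ∀ x, ⟪S x, x⟫ - ⟪T x, x⟫ ≤ c * ‖x‖ ^ 2) (i : Fin n) :
    hS.eigenvalues hn i ≤ hT.eigenvalues hn i + c := by
  obtain ⟨V, hV, hSV⟩ := hS.exists_finrank_le_forall_mul_norm_sq_le_inner hn i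
  have := hT.le_eigenvalues_of_forall_mul_norm_sq_le_inner hn i hV
    (c := hS.eigenvalues hn i - c) fun x hx => by nlinarith [hSV x hx, hc x]
  linarith

theorem abs_eigenvalues_sub_le (hS : S.IsSymmetric) (hT : T.IsSymmetric)
    (hn : finrank ℝ E = n) (i : Fin n) :
    |hS.eigenvalues hn i - hT.eigenvalues hn i| ≤ ‖(S - T).toContinuousLinearMap‖ := by
  have key : ∀ x, |⟪S x, x⟫ - ⟪T x, x⟫| ≤ ‖(S - T).toContinuousLinearMap‖ * ‖x‖ ^ 2 := by
    intro x
    rw [← inner_sub_left, ← LinearMap.sub_apply, sq, ← mul_assoc]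
    exact (abs_real_inner_le_norm _ _).trans
      (mul_le_mul_of_nonneg_right ((S - T).toContinuousLinearMap.le_opNorm x) (norm_nonneg _))
  rw [abs_sub_le_iff]
  constructor
  · linarith [hS.eigenvalues_le_add_of_inner_sub_le hT hn (fun x => (abs_le.mp (key x)).2) i]
  · linarith [hT.eigenvalues_le_add_of_inner_sub_le hS hn
      (fun x => by linarith [(abs_le.mp (key x)).1]) i]

theorem eigenvalues_congr (hS : S.IsSymmetric) (hT : T.IsSymmetric) (h : S = T)
    (hn : finrank ℝ E = n) : hS.eigenvalues hn = hT.eigenvalues hn := by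
  subst h
  rfl

theorem eigenvalues_eq_comp_finCongr (hT : T.IsSymmetric) {n' : ℕ} (hn : finrank ℝ E = n)
    (hn' : finrank ℝ E = n') :
    hT.eigenvalues hn = hT.eigenvalues hn' ∘ finCongr (hn.symm.trans hn') := by
  subst hn hn'
  rfl

theorem eigenvalues_smul (hT : T.IsSymmetric) {c : ℝ} (hc : 0 < c) (hn : finrank ℝ E = n)
    (i : Fin n) :
    (hT.smul (conj_trivial c)).eigenvalues hn i = c * hT.eigenvalues hn i := by
  have hcT := hT.smul (conj_trivial c)
  obtain ⟨V, hV, hTV⟩ := hT.exists_finrank_le_forall_mul_norm_sq_le_inner hn i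
  obtain ⟨W, hW, hcTW⟩ := hcT.exists_finrank_le_forall_mul_norm_sq_le_inner hn i
  refine le_antisymm ?_ ?_
  · have := hT.le_eigenvalues_of_forall_mul_norm_sq_le_inner hn i hW
      (c := c⁻¹ * hcT.eigenvalues hn i) fun x hx => by
        have hx' := hcTW x hx
        simp only [LinearMap.smul_apply, real_inner_smul_left] at hx'
        rw [mul_assoc]
        exact (inv_mul_le_iff₀ hc).mpr hx'
    rwa [inv_mul_le_iff₀ hc] at this
  · refine hcT.le_eigenvalues_of_forall_mul_norm_sq_le_inner hn i hV fun x hx => ?_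
    simp only [LinearMap.smul_apply, real_inner_smul_left, mul_assoc]
    exact mul_le_mul_of_nonneg_left (hTV x hx) hc.le

end LinearMap.IsSymmetric

namespace LinearMap

variable {E F : Type*} [NormedAddCommGroup E] [InnerProductSpace ℝ E]
  [NormedAddCommGroup F] [InnerProductSpace ℝ F]

theorem injective_domRestrict_of_mul_norm_sq_le (T : E →ₗ[ℝ] F) {V : Submodule ℝ E} {c : ℝ}
    (hc : 0 < c) (hV : ∀ x ∈ V, c * ‖x‖ ^ 2 ≤ ‖T x‖ ^ 2) :
    Function.Injective (T.domRestrict V) := by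
  refine (injective_iff_map_eq_zero _).mpr fun x hx => ?_
  have := hV x x.2
  rw [← domRestrict_apply, hx, norm_zero, zero_pow two_ne_zero] at this
  have : ‖(x : E)‖ ^ 2 ≤ 0 := nonpos_of_mul_nonpos_right this hc
  simpa using this

variable [FiniteDimensional ℝ E] [FiniteDimensional ℝ F]

theorem mul_norm_sq_le_norm_adjoint_apply_sq (T : E →ₗ[ℝ] F) {c : ℝ} {x : E}
    (hx : c * ‖x‖ ^ 2 ≤ ‖T x‖ ^ 2) : c * ‖T x‖ ^ 2 ≤ ‖adjoint T (T x)‖ ^ 2 := by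
  rcases eq_or_ne x 0 with rfl | hx0
  · simp
  have hCS : ‖T x‖ ^ 2 ≤ ‖adjoint T (T x)‖ * ‖x‖ := by
    rw [← real_inner_self_eq_norm_sq, ← adjoint_inner_left]
    exact real_inner_le_norm _ _
  have hxpos : 0 < ‖x‖ ^ 2 := by positivity
  have : c * ‖T x‖ ^ 2 * ‖x‖ ^ 2 ≤ ‖adjoint T (T x)‖ ^ 2 * ‖x‖ ^ 2 := by
    nlinarith [sq_nonneg (‖T x‖), norm_nonneg (adjoint T (T x))]
  exact le_of_mul_le_mul_right this hxpos

theorem inner_adjoint_comp_self_apply (T : E →ₗ[ℝ] F) (x : E) :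
    ⟪(adjoint T ∘ₗ T) x, x⟫ = ‖T x‖ ^ 2 := by
  rw [comp_apply, adjoint_inner_left, real_inner_self_eq_norm_sq]

-- `T` maps the top `i + 1` eigenvectors of `T† T` onto a subspace of dimension `i + 1` on which
-- `T T†` is at least `σᵢ(T)²`.
theorem singularValues_le_singularValues_adjoint (T : E →ₗ[ℝ] F) (i : ℕ) :
    T.singularValues i ≤ (adjoint T).singularValues i := by
  rcases (T.singularValues_nonneg i).eq_or_lt with h | hpos
  · exact h ▸ (adjoint T).singularValues_nonneg i
  have hiT := T.singularValues_pos_iff_lt_finrank_range.mp hpos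
  have hiE : i < finrank ℝ E := hiT.trans_le T.finrank_range_le
  have hiF : i < finrank ℝ F := hiT.trans_le (Submodule.finrank_le _)
  obtain ⟨V, hV, hTV⟩ :=
    T.isSymmetric_adjoint_comp_self.exists_finrank_le_forall_mul_norm_sq_le_inner rfl ⟨i, hiE⟩
  rw [← T.sq_singularValues_of_lt rfl hiE] at hTV
  simp only [inner_adjoint_comp_self_apply] at hTV
  have hW : i + 1 ≤ finrank ℝ (range (T.domRestrict V)) := by
    rwa [finrank_range_of_inj (T.injective_domRestrict_of_mul_norm_sq_le (by positivity) hTV)]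
  have := (adjoint T).isSymmetric_adjoint_comp_self.le_eigenvalues_of_forall_mul_norm_sq_le_inner
    rfl ⟨i, hiF⟩ hW (c := T.singularValues i ^ 2) <| by
      rintro _ ⟨x, rfl⟩
      rw [inner_adjoint_comp_self_apply, domRestrict_apply]
      exact (T.mul_norm_sq_le_norm_adjoint_apply_sq (hTV x x.2))
  rw [← (adjoint T).sq_singularValues_of_lt rfl hiF] at this
  exact (pow_le_pow_iff_left₀ (T.singularValues_nonneg i)
    ((adjoint T).singularValues_nonneg i) two_ne_zero).mp this

theorem singularValues_adjoint (T : E →ₗ[ℝ] F) :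
    (adjoint T).singularValues = T.singularValues := by
  ext i
  refine le_antisymm ?_ (T.singularValues_le_singularValues_adjoint i)
  simpa using (adjoint T).singularValues_le_singularValues_adjoint i

theorem sq_singularValues_eq_eigenvalues_self_comp_adjoint (T : E →ₗ[ℝ] F) {m : ℕ}
    (hm : finrank ℝ F = m) {i : ℕ} (hi : i < m) :
    T.singularValues i ^ 2 = T.isSymmetric_self_comp_adjoint.eigenvalues hm ⟨i, hi⟩ := by
  rw [← singularValues_adjoint, sq_singularValues_of_lt _ hm hi]
  exact congrFun (IsSymmetric.eigenvalues_congr _ _ (by rw [adjoint_adjoint]) hm) _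

end LinearMap

namespace Matrix

theorem isHermitian_transpose_mul_self {l o : Type*} [Fintype l] (A : Matrix l o ℝ) :
    (Aᵀ * A).IsHermitian := by
  simpa using isHermitian_conjTranspose_mul_self A

theorem isHermitian_mul_transpose_self {l o : Type*} [Fintype o] (A : Matrix l o ℝ) :
    (A * Aᵀ).IsHermitian := by
  simpa using isHermitian_mul_conjTranspose_self A

open scoped Matrix.Norms.L2Operator in
theorem specNorm_eq_l2_opNorm {l o : Type*} [Fintype l] [Fintype o] [DecidableEq o]
    (A : Matrix l o ℝ) : specNorm A = ‖A‖ :=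
  rfl

section

variable {l o : Type*} [Fintype l] [Fintype o] [DecidableEq l] [DecidableEq o]

theorem toEuclideanLin_transpose (A : Matrix l o ℝ) :
    toEuclideanLin Aᵀ = LinearMap.adjoint (toEuclideanLin A) := by
  rw [← conjTranspose_eq_transpose_of_trivial, toEuclideanLin_conjTranspose_eq_adjoint]

theorem toEuclideanLin_transpose_mul_self (A : Matrix l o ℝ) :
    toEuclideanLin (Aᵀ * A) = LinearMap.adjoint (toEuclideanLin A) ∘ₗ toEuclideanLin A := by
  rw [toLpLin_mul_same, toEuclideanLin_transpose]

theorem toEuclideanLin_mul_transpose_self (A : Matrix l o ℝ) :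
    toEuclideanLin (A * Aᵀ) = toEuclideanLin A ∘ₗ LinearMap.adjoint (toEuclideanLin A) := by
  rw [toLpLin_mul_same, toEuclideanLin_transpose]

open scoped Matrix.Norms.L2Operator

theorem l2_opNorm_transpose (A : Matrix l o ℝ) : ‖Aᵀ‖ = ‖A‖ := by
  rw [← conjTranspose_eq_transpose_of_trivial, l2_opNorm_conjTranspose]

theorem l2_opNorm_add_mul_transpose_add_sub_le (A E : Matrix l o ℝ) :
    ‖(A + E) * (A + E)ᵀ - A * Aᵀ‖ ≤ 2 * ‖A‖ * ‖E‖ + ‖E‖ ^ 2 := by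
  have : (A + E) * (A + E)ᵀ - A * Aᵀ = A * Eᵀ + E * Aᵀ + E * Eᵀ := by
    simp only [transpose_add, Matrix.add_mul, Matrix.mul_add]
    abel
  rw [this]
  calc ‖A * Eᵀ + E * Aᵀ + E * Eᵀ‖ ≤ ‖A‖ * ‖Eᵀ‖ + ‖E‖ * ‖Aᵀ‖ + ‖E‖ * ‖Eᵀ‖ :=
        norm_add₃_le.trans (by gcongr <;> exact l2_opNorm_mul _ _)
    _ = 2 * ‖A‖ * ‖E‖ + ‖E‖ ^ 2 := by rw [l2_opNorm_transpose, l2_opNorm_transpose]; ring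

end

variable {m n N : ℕ}

-- Both sides are antitone rearrangements of the same tuple of eigenvalues.
theorem eigDesc_eq_eigenvalues {S : Matrix (Fin N) (Fin N) ℝ} (hS : S.IsHermitian) :
    eigDesc S = (isSymmetric_toEuclideanLin_iff.mpr hS).eigenvalues finrank_euclideanSpace_fin := by
  set f := (isSymmetric_toEuclideanLin_iff.mpr hS).eigenvalues finrank_euclideanSpace_fin
  let π : Equiv.Perm (Fin N) := Fin.revPerm.trans ((Tuple.sort hS.eigenvalues).trans
    ((Fintype.equivOfCardEq (Fintype.card_fin _)).symm.trans (finCongr (Fintype.card_fin N))))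
  have hπ : eigDesc S = f ∘ π := by
    funext j
    rw [eigDesc, dif_pos hS]
    simp [π, IsHermitian.eigenvalues, IsHermitian.eigenvalues₀, f,
      LinearMap.IsSymmetric.eigenvalues_eq_comp_finCongr _ finrank_euclideanSpace
        finrank_euclideanSpace_fin]
  have hanti : Antitone (eigDesc S) := by
    intro a b hab
    simp only [eigDesc, dif_pos hS]
    exact Tuple.monotone_sort hS.eigenvalues (Fin.rev_le_rev.mpr hab)
  rw [hπ]
  exact Tuple.unique_antitone (σ := π) (τ := Equiv.refl _) (hπ ▸ hanti)
    (LinearMap.IsSymmetric.eigenvalues_antitone _ _)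

theorem sval_eq_singularValues (A : Matrix (Fin m) (Fin n) ℝ) (i : ℕ) :
    sval A i = (toEuclideanLin A).singularValues i := by
  by_cases hi : i < n
  · rw [sval, dif_pos hi, eigDesc_eq_eigenvalues (isHermitian_transpose_mul_self A),
      (toEuclideanLin A).singularValues_of_lt (finrank_euclideanSpace_fin (𝕜 := ℝ)) hi]
    congr 1
    exact congrFun (LinearMap.IsSymmetric.eigenvalues_congr _ _
      (toEuclideanLin_transpose_mul_self A) _) _
  · rw [sval, dif_neg hi, LinearMap.singularValues_of_finrank_le]
    simpa using hi

theorem sval_nonneg (A : Matrix (Fin m) (Fin n) ℝ) (i : ℕ) : 0 ≤ sval A i := by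
  rw [sval_eq_singularValues]
  exact LinearMap.singularValues_nonneg _ i

theorem sq_sval_eq_eigDesc_mul_transpose (A : Matrix (Fin m) (Fin n) ℝ) {i : ℕ} (hi : i < m) :
    sval A i ^ 2 = eigDesc (A * Aᵀ) ⟨i, hi⟩ := by
  rw [sval_eq_singularValues, LinearMap.sq_singularValues_eq_eigenvalues_self_comp_adjoint _
    finrank_euclideanSpace_fin hi, eigDesc_eq_eigenvalues (isHermitian_mul_transpose_self A)]
  exact congrFun (LinearMap.IsSymmetric.eigenvalues_congr _ _
    (toEuclideanLin_mul_transpose_self A).symm _) _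

theorem sval_pos_of_lt_rank (A : Matrix (Fin m) (Fin n) ℝ) {i : ℕ} (hi : i < A.rank) :
    0 < sval A i := by
  rwa [sval_eq_singularValues, LinearMap.singularValues_pos_iff_lt_finrank_range,
    toEuclideanLin_eq_toLin_orthonormal, ← rank_eq_finrank_range_toLin]

theorem eigDesc_smul {S : Matrix (Fin N) (Fin N) ℝ} (hS : S.IsHermitian) {c : ℝ} (hc : 0 < c)
    (j : Fin N) : eigDesc (c • S) j = c * eigDesc S j := by
  rw [eigDesc_eq_eigenvalues (hS.smul (IsSelfAdjoint.all c)), eigDesc_eq_eigenvalues hS,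
    ← LinearMap.IsSymmetric.eigenvalues_smul _ hc]
  exact congrFun (LinearMap.IsSymmetric.eigenvalues_congr _ _ (map_smul _ _ _) _) _

theorem abs_eigDesc_sub_le_specNorm {S T : Matrix (Fin N) (Fin N) ℝ} (hS : S.IsHermitian)
    (hT : T.IsHermitian) (j : Fin N) : |eigDesc S j - eigDesc T j| ≤ specNorm (S - T) := by
  rw [eigDesc_eq_eigenvalues hS, eigDesc_eq_eigenvalues hT, specNorm, map_sub]
  exact LinearMap.IsSymmetric.abs_eigenvalues_sub_le _ _ _ j

theorem hconcat_mul_transpose {k : ℕ} (B C : Fin k → Matrix (Fin m) (Fin n) ℝ) :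
    hconcat B * (hconcat C)ᵀ = ∑ j, B j * (C j)ᵀ := by
  ext a b
  simp only [mul_apply, transpose_apply, hconcat, of_apply, sum_apply]
  rw [← finProdFinEquiv.sum_comp, Fintype.sum_prod_type]
  simp

open scoped Matrix.Norms.L2Operator in
theorem specNorm_hconcat_mul_transpose_sub_le {k : ℕ} (A : Matrix (Fin m) (Fin n) ℝ)
    (E : Fin k → Matrix (Fin m) (Fin n) ℝ) :
    specNorm (hconcat (fun j => A + E j) * (hconcat fun j => A + E j)ᵀ - (k : ℝ) • (A * Aᵀ))
      ≤ ∑ j, (2 * specNorm A * specNorm (E j) + specNorm (E j) ^ 2) := by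
  have : hconcat (fun j => A + E j) * (hconcat fun j => A + E j)ᵀ - (k : ℝ) • (A * Aᵀ)
      = ∑ j, ((A + E j) * (A + E j)ᵀ - A * Aᵀ) := by
    rw [hconcat_mul_transpose, Finset.sum_sub_distrib, Finset.sum_const, Finset.card_univ,
      Fintype.card_fin, Nat.cast_smul_eq_nsmul]
  rw [specNorm_eq_l2_opNorm, this]
  exact (norm_sum_le _ _).trans (Finset.sum_le_sum fun j _ =>
    l2_opNorm_add_mul_transpose_add_sub_le A (E j))

end Matrix

theorem abs_sub_mul_le_abs_sq_sub {a b : ℝ} (ha : 0 ≤ a) (hb : 0 ≤ b) :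
    |a - b| * b ≤ |a ^ 2 - b ^ 2| := by
  rw [sq_sub_sq, abs_mul, abs_of_nonneg (add_nonneg ha hb), mul_comm (a + b)]
  exact mul_le_mul_of_nonneg_left (le_add_of_nonneg_left ha) (abs_nonneg _)

theorem stmt10 {m n k : ℕ} (hk : 2 ≤ k) (A : Matrix (Fin m) (Fin n) ℝ)
    (E : Fin k → Matrix (Fin m) (Fin n) ℝ) (hE0 : E ⟨0, by omega⟩ = 0)
    (i : ℕ) (hi : i < A.rank) :
    |sval (hconcat fun j => A + E j) i - Real.sqrt k * sval A i|
      ≤ (1 / (Real.sqrt k * sval A i))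
          * ∑ j ∈ Finset.univ.erase (⟨0, by omega⟩ : Fin k),
              (2 * specNorm A * specNorm (E j) + specNorm (E j) ^ 2) := by
  have hm : i < m := hi.trans_le A.rank_le_height
  have hk0 : (0 : ℝ) < k := by exact_mod_cast (by omega : 0 < k)
  set M := hconcat fun j => A + E j
  have hAA := isHermitian_mul_transpose_self A
  have hweyl : |sval M i ^ 2 - (√k * sval A i) ^ 2|
      ≤ specNorm (M * Mᵀ - (k : ℝ) • (A * Aᵀ)) := by
    rw [mul_pow, Real.sq_sqrt hk0.le, sq_sval_eq_eigDesc_mul_transpose M hm,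
      sq_sval_eq_eigDesc_mul_transpose A hm, ← eigDesc_smul hAA hk0]
    exact abs_eigDesc_sub_le_specNorm (isHermitian_mul_transpose_self M)
      (hAA.smul (IsSelfAdjoint.all _)) _
  have hpert : specNorm (M * Mᵀ - (k : ℝ) • (A * Aᵀ))
      ≤ ∑ j ∈ Finset.univ.erase (⟨0, by omega⟩ : Fin k),
          (2 * specNorm A * specNorm (E j) + specNorm (E j) ^ 2) := by
    refine (specNorm_hconcat_mul_transpose_sub_le A E).trans_eq (Finset.sum_erase _ ?_).symm
    simp [hE0, specNorm]
  have hσA : 0 < √k * sval A i := mul_pos (Real.sqrt_pos.mpr hk0) (sval_pos_of_lt_rank A hi)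
  rw [one_div_mul_eq_div, le_div_iff₀ hσA]
  exact (abs_sub_mul_le_abs_sq_sub (sval_nonneg M i) hσA.le).trans (hweyl.trans hpert)
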